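/- (Lemma 1) The K-linear map obtained by restricting the substitution homomorphism u to the space R_𝐝 of multihomogeneous polynomials of multidegree 𝐝 = (d_1,…,d_s) is injective: if f ∈ R_𝐝 and u(f) = 0, then f = 0. -/

import Mathlib

open MvPolynomial

/-- Variables of `R`: `x_{i,j}` for `j : Fin s`, `i : Fin (n j + 1)` (index `0` is `x_{0,j}`). -/
abbrev RVar (s : ℕ) (n : Fin s → ℕ) := Σ j : Fin s, Fin (n j + 1)

/-- Variables of `S`: `none` is `z_0`, `some ⟨j,i⟩` is `z_{i+1,j}`. -/
abbrev SVar (s : ℕ) (n : Fin s → ℕ) := Option (Σ j : Fin s, Fin (n j))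

/-- `f` is multihomogeneous of multidegree `d`. -/
def MultiHomog {K : Type*} [CommSemiring K] {s : ℕ} {n : Fin s → ℕ} (d : Fin s → ℕ)
    (f : MvPolynomial (RVar s n) K) : Prop :=
  ∀ m ∈ f.support, ∀ j : Fin s, ∑ i : Fin (n j + 1), m ⟨j, i⟩ = d j

/-- The substitution `u : R → S`, `x_{0,j} ↦ z_0`, `x_{i,j} ↦ z_{i,j}` for `i ≥ 1`. -/
noncomputable def subst (K : Type*) [CommSemiring K] (s : ℕ) (n : Fin s → ℕ) :
    MvPolynomial (RVar s n) K →ₐ[K] MvPolynomial (SVar s n) K :=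
  aeval fun v => if h : (v.2 : ℕ) = 0 then X none
    else X (some ⟨v.1, ⟨(v.2 : ℕ) - 1, by have := v.2.isLt; omega⟩⟩)

/-! The substitution `u` is a renaming of variables, so it sends each monomial `x^m` to a
monomial `z^{m'}` with the same coefficient. The exponent map `m ↦ m'` keeps the exponent of
every `x_{i,j}` with `i ≥ 1`, and on monomials of multidegree `𝐝` the exponent of `x_{0,j}` is
`d_j` minus those. Hence distinct monomials of `f ∈ R_𝐝` go to distinct monomials, and no
cancellation can occur in `u f`. -/

namespace Finsupp

variable {α β M : Type*} [AddCommMonoid M]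

theorem mapDomain_apply_of_fiber_eq (f : α → β) (m : α →₀ M) {a : α}
    (ha : ∀ x, f x = f a → x = a) : m.mapDomain f (f a) = m a := by
  classical
  rw [mapDomain_apply_eq_sum, Finset.sum_eq_single a]
  · exact fun x hx hne => absurd (ha x (Finset.mem_filter.1 hx).2) hne
  · simp

end Finsupp

namespace MvPolynomial

variable {σ τ R : Type*} [CommSemiring R] {f : σ → τ} {φ : MvPolynomial σ R}

theorem coeff_rename_mapDomain_of_injOn
    (hφ : Set.InjOn (Finsupp.mapDomain f) (φ.support : Set (σ →₀ ℕ)))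
    {d : σ →₀ ℕ} (hd : d ∈ φ.support) : (rename f φ).coeff (d.mapDomain f) = φ.coeff d := by
  classical
  conv_lhs => rw [φ.as_sum, map_sum]
  simp only [rename_monomial, coeff_sum, coeff_monomial]
  rw [Finset.sum_eq_single_of_mem d hd]
  · simp
  · intro u hu hne
    exact if_neg fun h => hne (hφ hu hd h)

theorem eq_zero_of_rename_eq_zero_of_injOn
    (hφ : Set.InjOn (Finsupp.mapDomain f) (φ.support : Set (σ →₀ ℕ)))
    (h : rename f φ = 0) : φ = 0 := by
  ext d
  by_contra hd
  have := coeff_rename_mapDomain_of_injOn hφ (mem_support_iff.2 hd)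
  simp_all

end MvPolynomial

section

variable {s : ℕ} {n : Fin s → ℕ}

def substVar (v : RVar s n) : SVar s n :=
  if h : (v.2 : ℕ) = 0 then none
  else some ⟨v.1, ⟨(v.2 : ℕ) - 1, by have := v.2.isLt; omega⟩⟩

theorem subst_eq_rename (K : Type*) [CommSemiring K] : subst K s n = rename substVar := by
  refine algHom_ext fun v => ?_
  simp only [subst, substVar, aeval_X, rename_X, apply_dite X]

theorem eq_of_substVar_eq_substVar_succ {j : Fin s} {i : Fin (n j)} {v : RVar s n}
    (h : substVar v = substVar ⟨j, i.succ⟩) : v = ⟨j, i.succ⟩ := by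
  obtain ⟨j', i'⟩ := v
  simp only [substVar, Fin.val_succ, Nat.add_one_ne_zero, ↓reduceDIte, Nat.add_sub_cancel] at h
  split_ifs at h with hi'
  obtain ⟨rfl, hi⟩ := Sigma.mk.inj_iff.1 (Option.some_injective _ h)
  ext
  · rfl
  · simp only [heq_eq_eq, Fin.ext_iff, Fin.val_succ] at hi ⊢
    omega

theorem mapDomain_substVar_injOn (d : Fin s → ℕ) :
    Set.InjOn (Finsupp.mapDomain substVar)
      {m : RVar s n →₀ ℕ | ∀ j, ∑ i : Fin (n j + 1), m ⟨j, i⟩ = d j} := by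
  intro m hm m' hm' h
  have hsucc : ∀ j (i : Fin (n j)), m ⟨j, i.succ⟩ = m' ⟨j, i.succ⟩ := fun j i => by
    have := congrArg (· (substVar ⟨j, i.succ⟩)) h
    rwa [Finsupp.mapDomain_apply_of_fiber_eq _ _ fun _ => eq_of_substVar_eq_substVar_succ,
      Finsupp.mapDomain_apply_of_fiber_eq _ _ fun _ => eq_of_substVar_eq_substVar_succ] at this
  ext ⟨j, i⟩
  induction i using Fin.cases with
  | zero =>
    have hsum := (hm j).trans (hm' j).symm
    simp only [Fin.sum_univ_succ, Finset.sum_congr rfl fun i _ => hsucc j i] at hsum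
    omega
  | succ i => exact hsucc j i

end

theorem stmt2_general (K : Type*) [Field K] (s : ℕ) (n : Fin s → ℕ)
    (d : Fin s → ℕ) (f : MvPolynomial (RVar s n) K) (hf : MultiHomog d f)
    (h : subst K s n f = 0) : f = 0 := by
  rw [subst_eq_rename] at h
  exact eq_zero_of_rename_eq_zero_of_injOn
    ((mapDomain_substVar_injOn d).mono fun m hm => hf m hm) h

/-- **Lemma 1.** The restriction of `u` to `R_𝐝` is injective:
if `f` is multihomogeneous of multidegree `𝐝` and `u f = 0`, then `f = 0`. -/
theorem stmt2 (K : Type*) [Field K] (s : ℕ) (hs : 0 < s) (n : Fin s → ℕ) (hn : ∀ j, 0 < n j)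
    (d : Fin s → ℕ) (f : MvPolynomial (RVar s n) K) (hf : MultiHomog d f)
    (h : subst K s n f = 0) : f = 0 :=
  stmt2_general K s n d f hf h
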